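/- Let Y be a finite poset, k a commutative ring, and x, y ∈ Y. Then the k-module Hom_{F_{Y,k}}(I_x, I_y) of natural transformations from I_x to I_y is isomorphic to k if y ≤ x, and is zero otherwise. -/

import Mathlib

/-!
`I_y` is co-represented by evaluation at `y`: a natural transformation `η : F ⟶ I_y` is
determined by its component at `y`, since for `z ≤ y` the transition map `I_y(z) → I_y(y)`
is the identity. For `F = I_x` that component is a linear map `I_x(y) → k`, where `I_x(y)` is
`0` unless `y ≤ x`, and is `k` when `y ≤ x`; in that case every scalar `c` is realised by the
transformation that multiplies by `c` everywhere.
-/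

open CategoryTheory
open scoped Classical
namespace PaperInterval
noncomputable def charFunctor (k : Type) [CommRing k] (P : Type) [PartialOrder P] (S : P → Prop)
    (hS : ∀ ⦃x y z : P⦄, x ≤ y → y ≤ z → S x → S z → S y) :
    P ⥤ ModuleCat.{0} k where
  obj x := ModuleCat.of k (PLift (S x) → k)
  map {x x'} _ := ModuleCat.ofHom
    { toFun := fun g _ => if h : S x then g ⟨h⟩ else 0
      map_add' := by intro g₁ g₂; funext h'; by_cases h : S x <;> simp [h]
      map_smul' := by intro r g; funext h'; by_cases h : S x <;> simp [h] }
  map_id x := by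
    apply ModuleCat.hom_ext; apply LinearMap.ext; intro g; funext h'
    by_cases h : S x
    · simp [dif_pos h]
    · exact absurd h'.down h
  map_comp {x y z} f g := by
    apply ModuleCat.hom_ext; apply LinearMap.ext; intro u; funext h'
    by_cases hx : S x
    · have hy : S y := hS (leOfHom f) (leOfHom g) hx h'.down
      simp [dif_pos hx, dif_pos hy]
    · by_cases hy : S y <;>
        simp [dif_neg hx, hy]

noncomputable def Mab (k : Type) [CommRing k] (X : Type) [PartialOrder X] (a b : X) :
    X ⥤ ModuleCat.{0} k :=
  charFunctor k X (fun x => a ≤ x ∧ x ≤ b)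
    (fun _ _ _ h1 h2 hx hz => ⟨hx.1.trans h1, h2.trans hz.2⟩)

noncomputable def Pfun (k : Type) [CommRing k] (P : Type) [PartialOrder P] (p : P) :
    P ⥤ ModuleCat.{0} k :=
  charFunctor k P (fun z => p ≤ z) (fun _ _ _ h1 _ hx _ => hx.trans h1)

noncomputable def Ifun (k : Type) [CommRing k] (P : Type) [PartialOrder P] (p : P) :
    P ⥤ ModuleCat.{0} k :=
  charFunctor k P (fun z => z ≤ p) (fun _ _ _ _ h2 _ hz => h2.trans hz)

section Ifun

variable {k : Type} [CommRing k] {P : Type} [PartialOrder P]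

lemma Ifun_map_apply_of_le {p z z' : P} (f : z ⟶ z') (hz : z ≤ p) (g : (Ifun k P p).obj z)
    (h : PLift (z' ≤ p)) : (Ifun k P p).map f g h = g ⟨hz⟩ :=
  dif_pos hz

lemma Ifun_obj_eq_smul_one {p z : P} (hz : z ≤ p) (g : (Ifun k P p).obj z) :
    g = g ⟨hz⟩ • fun _ => (1 : k) :=
  funext fun _ => (mul_one _).symm

lemma Ifun_obj_subsingleton {p z : P} (hz : ¬ z ≤ p) : Subsingleton ((Ifun k P p).obj z) :=
  ⟨fun _ _ => funext fun h => absurd h.down hz⟩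

lemma app_Ifun_apply {F : P ⥤ ModuleCat.{0} k} {y z : P} (η : F ⟶ Ifun k P y) (g : F.obj z)
    (h : PLift (z ≤ y)) : η.app z g h = η.app y (F.map (homOfLE h.down) g) ⟨le_rfl⟩ := by
  have hnat := congr_arg (fun φ => φ.hom g ⟨le_rfl⟩) (η.naturality (homOfLE h.down))
  simp only [ModuleCat.hom_comp, LinearMap.comp_apply] at hnat
  exact (Ifun_map_apply_of_le _ h.down _ _).symm.trans hnat.symm

lemma hom_Ifun_ext {F : P ⥤ ModuleCat.{0} k} {y : P} {η η' : F ⟶ Ifun k P y}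
    (h : η.app y = η'.app y) : η = η' := by
  ext z g
  funext hz
  rw [app_Ifun_apply η, app_Ifun_apply η', h]

noncomputable def homIfunOfScalar {x y : P} (hyx : y ≤ x) (c : k) : Ifun k P x ⟶ Ifun k P y where
  app z := ModuleCat.ofHom
    { toFun := fun g h => c * g ⟨h.down.trans hyx⟩
      map_add' := fun _ _ => funext fun _ => mul_add _ _ _
      map_smul' := fun _ _ => funext fun _ => mul_left_comm _ _ _ }
  naturality z z' f := by
    ext g
    funext h
    have hzy : z ≤ y := (leOfHom f).trans h.down
    change c * (Ifun k P x).map f g _ = (Ifun k P y).map f _ h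
    rw [Ifun_map_apply_of_le f (hzy.trans hyx), Ifun_map_apply_of_le f hzy]
    rfl

noncomputable def homIfunEquiv {x y : P} (hyx : y ≤ x) : (Ifun k P x ⟶ Ifun k P y) ≃ₗ[k] k where
  toFun η := η.app y (fun _ => 1) ⟨le_rfl⟩
  map_add' _ _ := rfl
  map_smul' _ _ := rfl
  invFun := homIfunOfScalar hyx
  left_inv η := hom_Ifun_ext <| by
    ext g
    funext h
    change _ * g _ = η.app y g h
    conv_rhs => rw [Ifun_obj_eq_smul_one hyx g]
    -- the pointwise `•` on `PLift _ → k` is the module `•` of the object only up to unfolding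
    erw [map_smul]
    exact mul_comm _ _
  right_inv := mul_one

end Ifun

theorem statement2_general (Y : Type) [PartialOrder Y] (k : Type) [CommRing k]
    (x y : Y) :
    (y ≤ x → Nonempty ((Ifun k Y x ⟶ Ifun k Y y) ≃ₗ[k] k)) ∧
    (¬ y ≤ x → Subsingleton (Ifun k Y x ⟶ Ifun k Y y)) := by
  refine ⟨fun hyx => ⟨homIfunEquiv hyx⟩, fun hyx => ⟨fun η η' => hom_Ifun_ext ?_⟩⟩
  have := Ifun_obj_subsingleton (k := k) hyx
  ext g
  rw [Subsingleton.elim g 0, map_zero, map_zero]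

/-- For a finite poset `Y`, a commutative ring `k` and `x y ∈ Y`,
the `k`-module `Hom_{F_{Y,k}}(I_x, I_y)` is isomorphic to `k` if `y ≤ x` and is zero
otherwise. -/
theorem statement2 (Y : Type) [PartialOrder Y] [Fintype Y] (k : Type) [CommRing k]
    (x y : Y) :
    (y ≤ x → Nonempty ((Ifun k Y x ⟶ Ifun k Y y) ≃ₗ[k] k)) ∧
    (¬ y ≤ x → Subsingleton (Ifun k Y x ⟶ Ifun k Y y)) :=
  statement2_general Y k x y

end PaperInterval
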